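/- Let D be a bounded open set, 0 < s < 1, and u ∈ H^s(ℝⁿ) with u = 0 outside D, u continuous on D, 0 ≤ u ≤ α on D for a constant α > 0, and suppose (-Δ)^s u = f pointwise a.e. in D. Then at every point x ∈ D with u(x) = α, one has f(x) ≥ ∫_{D^c} α/|x-y|^{n+2s} dy > 0. In particular f > 0 a.e. on {u = α}. -/
import Mathlib


open MeasureTheory Filter Set

/-- Claim 7 of Theorem 3.2: let `u ∈ H^s(ℝⁿ)` vanish outside the bounded open set `D`,
be continuous on `D` with `0 ≤ u ≤ α`, and satisfy `(-Δ)^s u = f` pointwise (as a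
principal value) a.e. in `D`. Then a.e. at points of the contact set `{u = α}` one has
`f(x) ≥ ∫_{Dᶜ} α/‖x-y‖^{n+2s} dy > 0`; in particular `f > 0` a.e. on `{u = α}`. -/
theorem load_positive_on_contact_set
    (n : ℕ) (hn : 0 < n) (s : ℝ) (hs : 0 < s) (hs1 : s < 1) (α : ℝ) (hα : 0 < α)
    (D : Set (EuclideanSpace ℝ (Fin n))) (hDopen : IsOpen D)
    (hDbdd : Bornology.IsBounded D)
    (u f : EuclideanSpace ℝ (Fin n) → ℝ)
    (hu0 : ∀ x ∉ D, u x = 0) (hucont : ContinuousOn u D)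
    (hubd : ∀ x ∈ D, 0 ≤ u x ∧ u x ≤ α)
    (hpv : ∀ᵐ x, x ∈ D → Tendsto
      (fun ε : ℝ => ∫ y in {y | ε ≤ dist x y}, (u x - u y) / dist x y ^ ((n : ℝ) + 2 * s))
      (nhdsWithin 0 (Ioi 0)) (nhds (f x))) :
    ∀ᵐ x, (x ∈ D ∧ u x = α) →
      (∫ y in Dᶜ, α / dist x y ^ ((n : ℝ) + 2 * s)) ≤ f x ∧
      0 < ∫ y in Dᶜ, α / dist x y ^ ((n : ℝ) + 2 * s) := by
  set p : ℝ := (n : ℝ) + 2 * s with hp_def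
  have hp_pos : 0 < p := by positivity
  have hnp : (Module.finrank ℝ (EuclideanSpace ℝ (Fin n)) : ℝ) < p := by
    rw [finrank_euclideanSpace_fin]
    linarith
  -- u is bounded by α in absolute value
  have hu_abs : ∀ y, |u y| ≤ α := by
    intro y
    by_cases hy : y ∈ D
    · rw [abs_le]; constructor <;> [linarith [(hubd y hy).1]; exact (hubd y hy).2]
    · rw [hu0 y hy]; simpa using hα.le
  -- u is a.e. measurable
  have hu_meas : AEMeasurable u volume := by
    have h1 : AEMeasurable u (volume.restrict D) :=
      hucont.aemeasurable hDopen.measurableSet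
    have h2 : AEMeasurable u (volume.restrict Dᶜ) := by
      refine aemeasurable_const (b := (0 : ℝ)) |>.congr ?_
      filter_upwards [ae_restrict_mem hDopen.measurableSet.compl] with y hy
      exact (hu0 y hy).symm
    have := h1.add_measure h2
    rwa [Measure.restrict_add_restrict_compl hDopen.measurableSet] at this
  filter_upwards [hpv] with x hx
  rintro ⟨hxD, hxα⟩
  replace hx := hx hxD
  -- integrability of the kernel away from x
  have hker : ∀ ε : ℝ, 0 < ε →
      IntegrableOn (fun y => (1 : ℝ) / dist x y ^ p) {y | ε ≤ dist x y} := by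
    intro ε hε
    have hbase : Integrable (fun y : EuclideanSpace ℝ (Fin n) => (1 + ‖y - x‖) ^ (-p)) :=
      (integrable_one_add_norm hnp).comp_sub_right x
    have hC : Integrable (fun y : EuclideanSpace ℝ (Fin n) =>
        (1 + 1/ε) ^ p * (1 + ‖y - x‖) ^ (-p)) := hbase.const_mul _
    refine Integrable.mono' hC.restrict ?_ ?_
    · refine AEMeasurable.aestronglyMeasurable ?_
      exact (aemeasurable_const.div
        ((continuous_const.dist continuous_id).measurable.pow_const p).aemeasurable)
    · filter_upwards [ae_restrict_mem (by
        have : {y : EuclideanSpace ℝ (Fin n) | ε ≤ dist x y} = (Metric.ball x ε)ᶜ := by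
          ext y; simp [Metric.mem_ball, dist_comm, not_lt]
        rw [this]; exact Metric.isOpen_ball.measurableSet.compl)] with y hy
      have hd : ε ≤ dist x y := hy
      have hd0 : 0 < dist x y := lt_of_lt_of_le hε hd
      have hdx : dist x y = ‖y - x‖ := by rw [dist_comm, dist_eq_norm]
      have key : (1 + ‖y - x‖) ^ p ≤ (1 + 1/ε) ^ p * dist x y ^ p := by
        rw [← Real.mul_rpow (by positivity) hd0.le]
        apply Real.rpow_le_rpow (by positivity) _ hp_pos.le
        rw [← hdx]
        have h1 : (1 : ℝ) ≤ dist x y / ε := (one_le_div hε).2 hd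
        calc 1 + dist x y ≤ dist x y / ε + dist x y := by linarith
          _ = (1 + 1/ε) * dist x y := by ring
      have hpow_pos : 0 < dist x y ^ p := Real.rpow_pos_of_pos hd0 p
      have hA : (0:ℝ) < (1 + ‖y - x‖) ^ p := Real.rpow_pos_of_pos (by positivity) p
      rw [Real.norm_eq_abs, abs_of_nonneg (by positivity),
        Real.rpow_neg (by positivity), ← one_div, mul_one_div,
        div_le_div_iff₀ hpow_pos hA, one_mul]
      exact key
  -- integrability of the full integrand away from x
  have hint : ∀ ε : ℝ, 0 < ε →
      IntegrableOn (fun y => (u x - u y) / dist x y ^ p) {y | ε ≤ dist x y} := by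
    intro ε hε
    refine Integrable.mono' (((hker ε hε).const_mul (2 * α))) ?_ ?_
    · exact ((aemeasurable_const.sub hu_meas).div
        ((continuous_const.dist continuous_id).measurable.pow_const p).aemeasurable
        ).aestronglyMeasurable.restrict
    · refine Filter.Eventually.of_forall fun y => ?_
      have hpow : 0 ≤ dist x y ^ p := Real.rpow_nonneg dist_nonneg p
      rw [Real.norm_eq_abs, abs_div, abs_of_nonneg hpow, mul_one_div]
      have hnum : |u x - u y| ≤ 2 * α :=
        calc |u x - u y| ≤ |u x| + |u y| := abs_sub _ _
          _ ≤ α + α := add_le_add (hu_abs x) (hu_abs y)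
          _ = 2 * α := by ring
      rcases hpow.eq_or_lt with h | h
      · simp [← h]
      · exact (div_le_div_iff_of_pos_right h).2 hnum
  -- the integrand is nonnegative
  have hnonneg : ∀ y, 0 ≤ (u x - u y) / dist x y ^ p := by
    intro y
    apply div_nonneg _ (Real.rpow_nonneg dist_nonneg p)
    rw [hxα]
    by_cases hy : y ∈ D
    · linarith [(hubd y hy).2]
    · rw [hu0 y hy]; linarith
  -- ball around x inside D
  obtain ⟨δ, hδ, hball⟩ := Metric.isOpen_iff.1 hDopen x hxD
  have hDc_sub : ∀ ε : ℝ, ε ≤ δ → Dᶜ ⊆ {y | ε ≤ dist x y} := by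
    intro ε hε y hy
    by_contra h
    simp only [mem_setOf_eq, not_le] at h
    exact hy (hball (by rw [Metric.mem_ball, dist_comm]; linarith))
  -- the integrand equals the kernel on Dᶜ
  have hcongr : ∫ y in Dᶜ, α / dist x y ^ p = ∫ y in Dᶜ, (u x - u y) / dist x y ^ p := by
    apply setIntegral_congr_fun hDopen.measurableSet.compl
    intro y hy
    show α / dist x y ^ p = (u x - u y) / dist x y ^ p
    rw [hu0 y hy, hxα, sub_zero]
  have hIc : IntegrableOn (fun y => (u x - u y) / dist x y ^ p) Dᶜ :=
    (hint δ hδ).mono_set (hDc_sub δ le_rfl)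
  constructor
  · -- the main inequality via the principal value limit
    refine ge_of_tendsto hx ?_
    filter_upwards [Ioc_mem_nhdsGT_of_mem (Set.left_mem_Ico.2 hδ)] with ε hε
    rw [hcongr]
    apply setIntegral_mono_set (hint ε hε.1)
    · exact Filter.Eventually.of_forall fun y => hnonneg y
    · exact (hDc_sub ε hε.2).eventuallyLE
  · -- positivity
    have hIg : IntegrableOn (fun y => α / dist x y ^ p) Dᶜ := by
      rw [show (fun y => α / dist x y ^ p) = fun y => α * (1 / dist x y ^ p) by
        funext y; rw [mul_one_div]]
      have h1 : IntegrableOn (fun y => α * (1 / dist x y ^ p)) {y | δ ≤ dist x y} :=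
        (hker δ hδ).const_mul α
      exact h1.mono_set (hDc_sub δ le_rfl)
    rw [setIntegral_pos_iff_support_of_nonneg_ae
      (Filter.Eventually.of_forall fun y => div_nonneg hα.le (Real.rpow_nonneg dist_nonneg p))
      hIg]
    have hsub : Dᶜ ⊆ Function.support (fun y => α / dist x y ^ p) ∩ Dᶜ := by
      intro y hy
      refine ⟨?_, hy⟩
      have hd0 : 0 < dist x y := lt_of_lt_of_le hδ (hDc_sub δ le_rfl hy)
      have : 0 < α / dist x y ^ p := div_pos hα (Real.rpow_pos_of_pos hd0 p)
      exact this.ne'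
    refine lt_of_lt_of_le ?_ (measure_mono hsub)
    have hDfin : volume D < ⊤ := hDbdd.measure_lt_top
    have huniv : volume (univ : Set (EuclideanSpace ℝ (Fin n))) = ⊤ := by
      haveI : Nonempty (Fin n) := Fin.pos_iff_nonempty.mp hn
      haveI : Nontrivial (EuclideanSpace ℝ (Fin n)) := inferInstance
      exact MeasureTheory.measure_univ_of_isAddLeftInvariant volume
    have : volume Dᶜ = ⊤ := by
      rw [measure_compl hDopen.measurableSet hDfin.ne, huniv]
      simp [hDfin.ne]
    rw [this]
    exact ENNReal.zero_lt_top
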